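/- arXiv:1704.04144 — 4 statements merged into one kernel-verified Lean document; each statement's English description precedes it below -/
import Mathlib

section
/- (Uniform boundedness of midpoint solutions, Proposition 5.4.) Let n ≥ 1, d ≥ 0, N ≥ 1, and let A₀, …, A_d ∈ M_n(ℝ) be skew-symmetric matrices. Let z ∈ ℝⁿ and let ξ₀, ξ₁, …, ξ_{N−1} ∈ ℝ^{d+1} be arbitrary increment vectors. Suppose the sequences (Y_k)_{k=0}^{N} and (Z_k)_{k=0}^{N−1} in ℝⁿ satisfy Y₀ = z and, for every k = 0, …, N−1, the midpoint relations Z_k = Y_k + (1/2) ∑_{i=0}^{d} (ξ_k)ᵢ Aᵢ Z_k and Y_{k+1} = Y_k + ∑_{i=0}^{d} (ξ_k)ᵢ Aᵢ Z_k. Then ‖Y_k‖ = ‖z‖ for every k = 0, …, N. -/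
/-!
A midpoint step writes `Y = Z - w/2` and `Y' = Z + w/2`, where `w = ∑ ξᵢ Aᵢ Z` is orthogonal
to `Z` because every `Aᵢ` is skew-symmetric; by Pythagoras `‖Y'‖ = ‖Y‖`, so the norm is
conserved along the whole scheme.
-/

open Matrix
open scoped RealInnerProductSpace

theorem Matrix.inner_toEuclideanLin_self_eq_zero_of_transpose_eq_neg {ι : Type*} [Fintype ι]
    [DecidableEq ι] {M : Matrix ι ι ℝ} (hM : Mᵀ = -M) (x : EuclideanSpace ℝ ι) :
    ⟪x, toEuclideanLin M x⟫ = 0 := by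
  have hdot : ⟪x, toEuclideanLin M x⟫ = x.ofLp ⬝ᵥ (M *ᵥ x.ofLp) := by
    rw [EuclideanSpace.inner_eq_star_dotProduct, dotProduct_comm]
    rfl
  have htr : x.ofLp ⬝ᵥ (M *ᵥ x.ofLp) = (Mᵀ *ᵥ x.ofLp) ⬝ᵥ x.ofLp := by
    rw [mulVec_transpose, dotProduct_mulVec]
  rw [hM, neg_mulVec, neg_dotProduct, dotProduct_comm (M *ᵥ _)] at htr
  rw [hdot]
  linarith

theorem inner_sum_smul_toEuclideanLin_self_eq_zero {ι κ : Type*} [Fintype ι] [DecidableEq ι]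
    [Fintype κ] {A : κ → Matrix ι ι ℝ} (hA : ∀ i, (A i)ᵀ = -(A i)) (c : κ → ℝ)
    (x : EuclideanSpace ℝ ι) : ⟪x, ∑ i, c i • toEuclideanLin (A i) x⟫ = 0 := by
  simp only [inner_sum, real_inner_smul_right,
    inner_toEuclideanLin_self_eq_zero_of_transpose_eq_neg (hA _), mul_zero, Finset.sum_const_zero]

theorem norm_add_eq_norm_of_midpoint_orthogonal {E : Type*} [NormedAddCommGroup E]
    [InnerProductSpace ℝ E] {y z w : E} (hzw : ⟪z, w⟫ = 0) (hz : z = y + (1 / 2 : ℝ) • w) :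
    ‖y + w‖ = ‖y‖ := by
  have hy : y = z - (1 / 2 : ℝ) • w := by rw [hz]; module
  have hy' : y + w = z + (1 / 2 : ℝ) • w := by rw [hy]; module
  have hperp : ⟪(1 / 2 : ℝ) • w, z⟫ = 0 := by
    rw [real_inner_smul_left, real_inner_comm, hzw, mul_zero]
  rw [hy', hy, norm_sub_eq_norm_add hperp]

theorem stmt_4_general (n d N : ℕ)
    (A : Fin (d + 1) → Matrix (Fin n) (Fin n) ℝ)
    (hA : ∀ i, (A i)ᵀ = -(A i))
    (z : EuclideanSpace ℝ (Fin n))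
    (ξ : ℕ → Fin (d + 1) → ℝ)
    (Y Z : ℕ → EuclideanSpace ℝ (Fin n))
    (hY0 : Y 0 = z)
    (hZ : ∀ k < N, Z k = Y k + (1 / 2 : ℝ) • ∑ i, ξ k i • Matrix.toEuclideanLin (A i) (Z k))
    (hY : ∀ k < N, Y (k + 1) = Y k + ∑ i, ξ k i • Matrix.toEuclideanLin (A i) (Z k)) :
    ∀ k ≤ N, ‖Y k‖ = ‖z‖ := by
  intro k hk
  induction k with
  | zero => rw [hY0]
  | succ k ih =>
    rw [← ih (by omega), hY k hk]
    exact norm_add_eq_norm_of_midpoint_orthogonal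
      (inner_sum_smul_toEuclideanLin_self_eq_zero hA (ξ k) (Z k)) (hZ k hk)

/-- Uniform boundedness of midpoint solutions (Proposition 5.4). -/
theorem stmt_4 (n d N : ℕ) (hn : 1 ≤ n) (hN : 1 ≤ N)
    (A : Fin (d + 1) → Matrix (Fin n) (Fin n) ℝ)
    (hA : ∀ i, (A i)ᵀ = -(A i))
    (z : EuclideanSpace ℝ (Fin n))
    (ξ : ℕ → Fin (d + 1) → ℝ)
    (Y Z : ℕ → EuclideanSpace ℝ (Fin n))
    (hY0 : Y 0 = z)
    (hZ : ∀ k < N, Z k = Y k + (1 / 2 : ℝ) • ∑ i, ξ k i • Matrix.toEuclideanLin (A i) (Z k))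
    (hY : ∀ k < N, Y (k + 1) = Y k + ∑ i, ξ k i • Matrix.toEuclideanLin (A i) (Z k)) :
    ∀ k ≤ N, ‖Y k‖ = ‖z‖ :=
  stmt_4_general n d N A hA z ξ Y Z hY0 hZ hY
end

section
/- (Symplecticity of Runge–Kutta methods, Theorem 4.1.) Let m ≥ 1, s ≥ 1, d ≥ 0, and let J ∈ M_{2m}(ℝ) be the standard symplectic matrix J = [[0, −I_m],[I_m, 0]]. Let H₀, …, H_d : ℝ^{2m} → ℝ be twice continuously differentiable, and set Vᵢ(y) = J ∇Hᵢ(y). Let a_{αβ}, b_α (α, β = 1, …, s) be real Runge–Kutta coefficients satisfying the symplectic condition b_α a_{αβ} + b_β a_{βα} = b_α b_β for all α, β = 1, …, s. Fix an increment vector ξ = (ξ₀, …, ξ_d) ∈ ℝ^{d+1}. Suppose that on an open set U ⊆ ℝ^{2m} there are differentiable maps Z₁, …, Z_s : U → ℝ^{2m} and Φ : U → ℝ^{2m} satisfying, for every y ∈ U, the stage equations Z_α(y) = y + ∑_{β=1}^{s} a_{αβ} ∑_{i=0}^{d} ξᵢ Vᵢ(Z_β(y)) and the update Φ(y) = y +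 ∑_{α=1}^{s} b_α ∑_{i=0}^{d} ξᵢ Vᵢ(Z_α(y)). Then for every y ∈ U the Jacobian matrix M = DΦ(y) is symplectic: Mᵀ J M = J. -/
/-!
Differentiating the stage and update equations on `U` shows that `Yα = DZα(y)` and `M = DΦ(y)`
satisfy the linearised scheme `Yα = 1 + ∑β aαβ Kβ Yβ`, `M = 1 + ∑α bα Kα Yα`, where
`Kα = J (∑ᵢ ξᵢ ∇²Hᵢ)(Zα y)` is `J` times a symmetric matrix, hence `Kαᵀ J + J Kα = 0`.
Expanding `Mᵀ J M - J`, this relation rewrites the linear terms as a double sum with coefficients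
`bα aαβ + bβ aβα`; the symplectic condition turns these into `bα bβ`, and the result cancels the
quadratic term.
-/

open Matrix
open scoped Gradient RealInnerProductSpace

section RungeKuttaAlgebra

variable {ι n R : Type*} [Fintype ι] [Fintype n] [DecidableEq n] [CommRing R]
  {a : ι → ι → R} {b : ι → R}

theorem sum_sum_smul_add_swap_of_symplectic {M : Type*} [AddCommGroup M]
    [Module R M] (hsymp : ∀ α β, b α * a α β + b β * a β α = b α * b β) (X : ι → ι → M) :
    ∑ α, ∑ β, (b α * a α β) • (X α β + X β α) = ∑ α, ∑ β, (b α * b β) • X α β := by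
  simp only [smul_add, Finset.sum_add_distrib]
  rw [Finset.sum_comm (f := fun α β => (b α * a α β) • X β α)]
  simp only [← Finset.sum_add_distrib, ← add_smul, hsymp]

theorem transpose_mul_mul_rungeKutta_update_eq
    (hsymp : ∀ α β, b α * a α β + b β * a β α = b α * b β) (J : Matrix n n R)
    {P Y : ι → Matrix n n R} (hY : ∀ α, Y α = 1 + ∑ β, a α β • P β)
    (hPY : ∀ α, (P α)ᵀ * J * Y α + (Y α)ᵀ * J * P α = 0) :
    (1 + ∑ α, b α • P α)ᵀ * J * (1 + ∑ α, b α • P α) = J := by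
  set A := ∑ α, b α • P α
  have hstage : ∀ α, (P α)ᵀ * J + J * P α
      = -∑ β, a α β • ((P α)ᵀ * J * P β + (P β)ᵀ * J * P α) := by
    intro α
    rw [eq_neg_iff_add_eq_zero, ← hPY α, hY α]
    simp only [transpose_add, transpose_one, transpose_sum, transpose_smul, Matrix.mul_add,
      Matrix.add_mul, Matrix.mul_one, Matrix.one_mul, Finset.mul_sum, Finset.sum_mul,
      Matrix.mul_smul, Matrix.smul_mul, smul_add, Finset.sum_add_distrib]
    abel
  have hlin : Aᵀ * J + J * A = -∑ α, ∑ β, (b α * b β) • ((P α)ᵀ * J * P β) := by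
    calc Aᵀ * J + J * A = ∑ α, b α • ((P α)ᵀ * J + J * P α) := by
          simp only [A, transpose_sum, transpose_smul, Finset.sum_mul, Finset.mul_sum,
            Matrix.smul_mul, Matrix.mul_smul, smul_add, Finset.sum_add_distrib]
      _ = -∑ α, ∑ β, (b α * a α β) • ((P α)ᵀ * J * P β + (P β)ᵀ * J * P α) := by
          simp only [hstage, smul_neg, Finset.smul_sum, smul_smul, Finset.sum_neg_distrib]
      _ = _ := by rw [sum_sum_smul_add_swap_of_symplectic hsymp]
  have hquad : Aᵀ * J * A = ∑ α, ∑ β, (b α * b β) • ((P α)ᵀ * J * P β) := by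
    simp only [A, transpose_sum, transpose_smul, Finset.sum_mul, Finset.mul_sum,
      Matrix.smul_mul, Matrix.mul_smul, smul_smul]
    exact Finset.sum_comm.trans <| Finset.sum_congr rfl fun α _ =>
      Finset.sum_congr rfl fun β _ => by rw [mul_comm]
  calc (1 + A)ᵀ * J * (1 + A) = J + (Aᵀ * J + J * A) + Aᵀ * J * A := by
        rw [transpose_add, transpose_one]; noncomm_ring
    _ = J := by rw [hlin, hquad, neg_add_cancel_right]

theorem transpose_mul_mul_rungeKutta_update_eq_of_isSkewAdjoint
    (hsymp : ∀ α β, b α * a α β + b β * a β α = b α * b β)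
    {J : Matrix n n R} {K Y : ι → Matrix n n R} (hK : ∀ α, J.IsSkewAdjoint (K α))
    (hY : ∀ α, Y α = 1 + ∑ β, a α β • (K β * Y β)) :
    (1 + ∑ α, b α • (K α * Y α))ᵀ * J * (1 + ∑ α, b α • (K α * Y α)) = J := by
  refine transpose_mul_mul_rungeKutta_update_eq hsymp J hY fun α => ?_
  have hKα : (K α)ᵀ * J = J * -K α := hK α
  calc (K α * Y α)ᵀ * J * Y α + (Y α)ᵀ * J * (K α * Y α)
      = (Y α)ᵀ * ((K α)ᵀ * J + J * K α) * Y α := by rw [transpose_mul]; noncomm_ring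
    _ = 0 := by rw [hKα, Matrix.mul_neg, neg_add_cancel, Matrix.mul_zero, Matrix.zero_mul]

end RungeKuttaAlgebra

theorem Matrix.isSkewAdjoint_J_mul {l R : Type*} [Fintype l] [DecidableEq l] [CommRing R]
    {S : Matrix (l ⊕ l) (l ⊕ l) R} (hS : S.IsSymm) : (J l R).IsSkewAdjoint (J l R * S) := by
  have hJJS : J l R * (J l R * S) = -S := by
    rw [← Matrix.mul_assoc, J_squared, Matrix.neg_mul, Matrix.one_mul]
  show (J l R * S)ᵀ * J l R = J l R * -(J l R * S)
  simp [transpose_mul, hS.eq, J_transpose, Matrix.mul_assoc, J_squared, hJJS]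

section Gradient

variable {E : Type*} [NormedAddCommGroup E] [InnerProductSpace ℝ E] [CompleteSpace E]
  {f : E → ℝ} {x : E}

theorem gradient_eq_toDual_symm_comp_fderiv :
    ∇ f = (InnerProductSpace.toDual ℝ E).symm ∘ fderiv ℝ f := rfl

theorem ContDiffAt.differentiableAt_gradient (hf : ContDiffAt ℝ 2 f x) :
    DifferentiableAt ℝ (∇ f) x := by
  rw [gradient_eq_toDual_symm_comp_fderiv]
  exact (InnerProductSpace.toDual ℝ E).symm.differentiableAt.comp x
    ((hf.fderiv_right (m := 1) le_rfl).differentiableAt one_ne_zero)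

theorem ContDiffAt.isSelfAdjoint_fderiv_gradient (hf : ContDiffAt ℝ 2 f x) :
    IsSelfAdjoint (fderiv ℝ (∇ f) x) := by
  have hsymm := hf.isSymmSndFDerivAt (by simp [minSmoothness_of_isRCLikeNormedField])
  have hinner : ∀ u v, ⟪fderiv ℝ (∇ f) x u, v⟫ = fderiv ℝ (fderiv ℝ f) x u v := by
    intro u v
    rw [gradient_eq_toDual_symm_comp_fderiv, LinearIsometryEquiv.comp_fderiv]
    exact InnerProductSpace.toDual_symm_apply
  rw [ContinuousLinearMap.isSelfAdjoint_iff_isSymmetric]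
  intro u v
  change ⟪fderiv ℝ (∇ f) x u, v⟫ = ⟪u, fderiv ℝ (∇ f) x v⟫
  rw [hinner, real_inner_comm, hinner, hsymm]

end Gradient

theorem Matrix.toEuclideanCLM_symm_eq_toMatrix {ι : Type*} [Fintype ι] [DecidableEq ι]
    (T : EuclideanSpace ℝ ι →L[ℝ] EuclideanSpace ℝ ι) :
    (toEuclideanCLM (n := ι) (𝕜 := ℝ)).symm T =
      LinearMap.toMatrix (EuclideanSpace.basisFun ι ℝ).toBasis
        (EuclideanSpace.basisFun ι ℝ).toBasis T.toLinearMap :=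
  rfl

theorem Matrix.isSymm_toEuclideanCLM_symm {ι : Type*} [Fintype ι] [DecidableEq ι]
    {T : EuclideanSpace ℝ ι →L[ℝ] EuclideanSpace ℝ ι} (hT : IsSelfAdjoint T) :
    ((toEuclideanCLM (n := ι) (𝕜 := ℝ)).symm T).IsSymm := by
  rw [IsSymm, ← conjTranspose_eq_transpose_of_trivial, ← star_eq_conjTranspose]
  exact ((toEuclideanCLM (n := ι) (𝕜 := ℝ)).symm.map_star' T).symm.trans
    (congrArg _ hT.star_eq)

theorem hasFDerivAt_add_sum_smul_comp {𝕜 E ι : Type*} [NontriviallyNormedField 𝕜]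
    [NormedAddCommGroup E] [NormedSpace 𝕜 E] [Fintype ι] {f : E → E} {Z : ι → E → E}
    {f' Z' : ι → E →L[𝕜] E} {y : E} (c : ι → 𝕜)
    (hf : ∀ β, HasFDerivAt f (f' β) (Z β y)) (hZ : ∀ β, HasFDerivAt (Z β) (Z' β) y) :
    HasFDerivAt (fun y' => y' + ∑ β, c β • f (Z β y')) (1 + ∑ β, c β • (f' β * Z' β)) y :=
  (hasFDerivAt_id y).add
    (HasFDerivAt.fun_sum fun β _ => ((hf β).comp y (hZ β)).const_smul (c β))

theorem exists_hasFDerivAt_sum_smul_hamiltonian {l κ : Type*} [Fintype l] [DecidableEq l]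
    [Fintype κ] {H : κ → EuclideanSpace ℝ (l ⊕ l) → ℝ} {z : EuclideanSpace ℝ (l ⊕ l)}
    (hH : ∀ i, ContDiffAt ℝ 2 (H i) z) (ξ : κ → ℝ) :
    ∃ K, HasFDerivAt (fun y => ∑ i, ξ i • toEuclideanLin (J l ℝ) (∇ (H i) y)) K z ∧
      (J l ℝ).IsSkewAdjoint ((toEuclideanCLM (n := l ⊕ l) (𝕜 := ℝ)).symm K) := by
  set Jₑ := toEuclideanCLM (n := l ⊕ l) (𝕜 := ℝ) (J l ℝ)
  refine ⟨∑ i, ξ i • (Jₑ * fderiv ℝ (∇ (H i)) z), HasFDerivAt.fun_sum fun i _ =>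
    (Jₑ.hasFDerivAt.comp z (hH i).differentiableAt_gradient.hasFDerivAt).const_smul (ξ i), ?_⟩
  rw [← mem_skewAdjointMatricesSubmodule, map_sum]
  refine Submodule.sum_mem _ fun i _ => ?_
  rw [map_smul, map_mul, StarAlgEquiv.symm_apply_apply]
  exact Submodule.smul_mem _ _ <| (mem_skewAdjointMatricesSubmodule _ _).2 <|
    isSkewAdjoint_J_mul (isSymm_toEuclideanCLM_symm (hH i).isSelfAdjoint_fderiv_gradient)

theorem stmt_5_general (m s d : ℕ)
    (J : Matrix (Fin m ⊕ Fin m) (Fin m ⊕ Fin m) ℝ)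
    (hJ : J = Matrix.fromBlocks 0 (-1) 1 0)
    (H : Fin (d + 1) → EuclideanSpace ℝ (Fin m ⊕ Fin m) → ℝ)
    (hH : ∀ i, ContDiff ℝ 2 (H i))
    (V : Fin (d + 1) → EuclideanSpace ℝ (Fin m ⊕ Fin m) → EuclideanSpace ℝ (Fin m ⊕ Fin m))
    (hV : ∀ i y, V i y = Matrix.toEuclideanLin J (gradient (H i) y))
    (a : Fin s → Fin s → ℝ) (b : Fin s → ℝ)
    (hsymp : ∀ α β, b α * a α β + b β * a β α = b α * b β)
    (ξ : Fin (d + 1) → ℝ)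
    (U : Set (EuclideanSpace ℝ (Fin m ⊕ Fin m))) (hU : IsOpen U)
    (Z : Fin s → EuclideanSpace ℝ (Fin m ⊕ Fin m) → EuclideanSpace ℝ (Fin m ⊕ Fin m))
    (Φ : EuclideanSpace ℝ (Fin m ⊕ Fin m) → EuclideanSpace ℝ (Fin m ⊕ Fin m))
    (hZdiff : ∀ α, ∀ y ∈ U, DifferentiableAt ℝ (Z α) y)
    (hstage : ∀ y ∈ U, ∀ α, Z α y = y + ∑ β, a α β • ∑ i, ξ i • V i (Z β y))
    (hupdate : ∀ y ∈ U, Φ y = y + ∑ α, b α • ∑ i, ξ i • V i (Z α y)) :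
    ∀ y ∈ U,
      (LinearMap.toMatrix (EuclideanSpace.basisFun (Fin m ⊕ Fin m) ℝ).toBasis
          (EuclideanSpace.basisFun (Fin m ⊕ Fin m) ℝ).toBasis
          (fderiv ℝ Φ y).toLinearMap)ᵀ * J *
        LinearMap.toMatrix (EuclideanSpace.basisFun (Fin m ⊕ Fin m) ℝ).toBasis
          (EuclideanSpace.basisFun (Fin m ⊕ Fin m) ℝ).toBasis
          (fderiv ℝ Φ y).toLinearMap = J := by
  intro y hy
  obtain rfl : J = Matrix.J (Fin m) ℝ := hJ
  choose K hK hKskew using fun z =>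
    exists_hasFDerivAt_sum_smul_hamiltonian (fun i => (hH i).contDiffAt (x := z)) ξ
  simp only [← hV] at hK
  have hstep : ∀ (c : Fin s → ℝ) (g : EuclideanSpace ℝ (Fin m ⊕ Fin m) → _),
      (∀ y' ∈ U, g y' = y' + ∑ β, c β • ∑ i, ξ i • V i (Z β y')) →
      HasFDerivAt g (1 + ∑ β, c β • (K (Z β y) * fderiv ℝ (Z β) y)) y := fun c g hg =>
    (hasFDerivAt_add_sum_smul_comp c (fun β => hK (Z β y))
      fun β => (hZdiff β y hy).hasFDerivAt).congr_of_eventuallyEq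
      (Filter.eventually_of_mem (hU.mem_nhds hy) hg)
  rw [(hstep b Φ hupdate).fderiv, ← toEuclideanCLM_symm_eq_toMatrix]
  simp only [map_add, map_one, map_sum, map_smul, map_mul]
  refine transpose_mul_mul_rungeKutta_update_eq_of_isSkewAdjoint hsymp
    (fun α => hKskew (Z α y)) fun α => ?_
  rw [(hstep (a α) (Z α) fun y' hy' => hstage y' hy' α).fderiv]
  simp only [map_add, map_one, map_sum, map_smul, map_mul]

/-- Symplecticity of Runge--Kutta methods (Theorem 4.1). -/
theorem stmt_5 (m s d : ℕ) (hm : 1 ≤ m) (hs : 1 ≤ s)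
    (J : Matrix (Fin m ⊕ Fin m) (Fin m ⊕ Fin m) ℝ)
    (hJ : J = Matrix.fromBlocks 0 (-1) 1 0)
    (H : Fin (d + 1) → EuclideanSpace ℝ (Fin m ⊕ Fin m) → ℝ)
    (hH : ∀ i, ContDiff ℝ 2 (H i))
    (V : Fin (d + 1) → EuclideanSpace ℝ (Fin m ⊕ Fin m) → EuclideanSpace ℝ (Fin m ⊕ Fin m))
    (hV : ∀ i y, V i y = Matrix.toEuclideanLin J (gradient (H i) y))
    (a : Fin s → Fin s → ℝ) (b : Fin s → ℝ)
    (hsymp : ∀ α β, b α * a α β + b β * a β α = b α * b β)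
    (ξ : Fin (d + 1) → ℝ)
    (U : Set (EuclideanSpace ℝ (Fin m ⊕ Fin m))) (hU : IsOpen U)
    (Z : Fin s → EuclideanSpace ℝ (Fin m ⊕ Fin m) → EuclideanSpace ℝ (Fin m ⊕ Fin m))
    (Φ : EuclideanSpace ℝ (Fin m ⊕ Fin m) → EuclideanSpace ℝ (Fin m ⊕ Fin m))
    (hZdiff : ∀ α, ∀ y ∈ U, DifferentiableAt ℝ (Z α) y)
    (hΦdiff : ∀ y ∈ U, DifferentiableAt ℝ Φ y)
    (hstage : ∀ y ∈ U, ∀ α, Z α y = y + ∑ β, a α β • ∑ i, ξ i • V i (Z β y))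
    (hupdate : ∀ y ∈ U, Φ y = y + ∑ α, b α • ∑ i, ξ i • V i (Z α y)) :
    ∀ y ∈ U,
      (LinearMap.toMatrix (EuclideanSpace.basisFun (Fin m ⊕ Fin m) ℝ).toBasis
          (EuclideanSpace.basisFun (Fin m ⊕ Fin m) ℝ).toBasis
          (fderiv ℝ Φ y).toLinearMap)ᵀ * J *
        LinearMap.toMatrix (EuclideanSpace.basisFun (Fin m ⊕ Fin m) ℝ).toBasis
          (EuclideanSpace.basisFun (Fin m ⊕ Fin m) ℝ).toBasis
          (fderiv ℝ Φ y).toLinearMap = J :=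
  stmt_5_general m s d J hJ H hH V hV a b hsymp ξ U hU Z Φ hZdiff hstage hupdate
end

section
/- (Second-order expansion of the midpoint step; estimate of R₂ in the proof of Theorem 5.2.) Let n ≥ 1, d ≥ 0, and let V₀, …, V_d : ℝⁿ → ℝⁿ be twice continuously differentiable with ‖Vᵢ(y)‖ ≤ ν, ‖DVᵢ(y)‖ ≤ ν, ‖D²Vᵢ(y)‖ ≤ ν for all y and i. Fix ξ = (ξ₀, …, ξ_d) ∈ ℝ^{d+1} and set W(y) = ∑_{i=0}^{d} ξᵢ Vᵢ(y). Suppose Y₀, Z ∈ ℝⁿ satisfy the midpoint stage equation Z = Y₀ + (1/2) W(Z), and set Y₁ = Y₀ + W(Z). Then there is a constant C, depending only on ν, d, and n, such that ‖Y₁ − Y₀ − W(Y₀) − (1/2) DW(Y₀)[W(Y₀)]‖ ≤ C (‖ξ‖³ + ‖ξ‖⁴). -/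
/-!
Write `W = ∑ ξᵢ Vᵢ`; then `W`, `DW` and `D²W` are all bounded by `a = (d + 1) ν ‖ξ‖`. Since
`Y₁ - Y₀ = W(Z)` and `Z - Y₀ = W(Z) / 2`, the remainder splits as the second-order Taylor
remainder `W(Z) - W(Y₀) - DW(Y₀)[Z - Y₀]`, of size `a ‖Z - Y₀‖² ≤ a³ / 4`, plus
`DW(Y₀)[W(Z) - W(Y₀)] / 2`, of size `a · a ‖Z - Y₀‖ / 2 ≤ a³ / 4`.
-/

section Expansion

variable {E F : Type*} [NormedAddCommGroup E] [NormedSpace ℝ E]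
  [NormedAddCommGroup F] [NormedSpace ℝ F]

lemma norm_sum_smul_le {ι : Type*} [Fintype ι] (ξ : EuclideanSpace ℝ ι) (T : ι → F) {ν : ℝ}
    (hT : ∀ i, ‖T i‖ ≤ ν) : ‖∑ i, ξ i • T i‖ ≤ Fintype.card ι * ν * ‖ξ‖ :=
  calc ‖∑ i, ξ i • T i‖ ≤ ∑ i, ‖ξ i • T i‖ := norm_sum_le _ _
    _ ≤ ∑ _i : ι, ν * ‖ξ‖ := by
        gcongr with i
        rw [norm_smul, mul_comm]
        exact mul_le_mul (hT i) (PiLp.norm_apply_le ξ i) (norm_nonneg _)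
          ((norm_nonneg _).trans (hT i))
    _ = Fintype.card ι * ν * ‖ξ‖ := by
        rw [Finset.sum_const, Finset.card_univ, nsmul_eq_mul, mul_assoc]

lemma fderiv_sum_smul {ι : Type*} [Fintype ι] (c : ι → ℝ) {V : ι → E → F}
    (hV : ∀ i, Differentiable ℝ (V i)) :
    fderiv ℝ (fun z => ∑ i, c i • V i z) = fun y => ∑ i, c i • fderiv ℝ (V i) y := by
  funext y
  rw [fderiv_fun_sum (A := fun i z => c i • V i z) fun i _ => ((hV i) y).const_smul (c i)]
  exact Finset.sum_congr rfl fun i _ => fderiv_const_smul ((hV i) y) (c i)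

lemma norm_fderiv_fderiv_eq_norm_iteratedFDeriv_two (f : E → F) (y : E) :
    ‖fderiv ℝ (fderiv ℝ f) y‖ = ‖iteratedFDeriv ℝ 2 f y‖ := by
  rw [← norm_iteratedFDeriv_one, norm_iteratedFDeriv_fderiv]

lemma norm_image_sub_sub_fderiv_le {f : E → F} (hf : Differentiable ℝ f)
    (hf' : Differentiable ℝ (fderiv ℝ f)) {M : ℝ} (hM : ∀ y, ‖fderiv ℝ (fderiv ℝ f) y‖ ≤ M)
    (x y : E) : ‖f y - f x - fderiv ℝ f x (y - x)‖ ≤ M * ‖y - x‖ * ‖y - x‖ := by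
  have hM₀ : 0 ≤ M := (norm_nonneg (fderiv ℝ (fderiv ℝ f) x)).trans (hM x)
  refine (convex_segment x y).norm_image_sub_le_of_norm_fderiv_le' (fun z _ => hf z) ?_
    (left_mem_segment ℝ x y) (right_mem_segment ℝ x y)
  intro z hz
  calc ‖fderiv ℝ f z - fderiv ℝ f x‖ ≤ M * ‖z - x‖ :=
        convex_univ.norm_image_sub_le_of_norm_fderiv_le (fun w _ => hf' w) (fun w _ => hM w)
          trivial trivial
    _ ≤ M * ‖y - x‖ := by gcongr; exact norm_sub_le_of_mem_segment hz

lemma norm_midpoint_remainder_le {W : E → E} (hW : Differentiable ℝ W)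
    (hW' : Differentiable ℝ (fderiv ℝ W)) {a : ℝ} (h₀ : ∀ y, ‖W y‖ ≤ a)
    (h₁ : ∀ y, ‖fderiv ℝ W y‖ ≤ a) (h₂ : ∀ y, ‖fderiv ℝ (fderiv ℝ W) y‖ ≤ a) {Y₀ Z : E}
    (hZ : Z = Y₀ + (1 / 2 : ℝ) • W Z) :
    ‖W Z - W Y₀ - (1 / 2 : ℝ) • fderiv ℝ W Y₀ (W Y₀)‖ ≤ a ^ 3 / 2 := by
  have ha : 0 ≤ a := (norm_nonneg _).trans (h₀ Y₀)
  have hstage : Z - Y₀ = (1 / 2 : ℝ) • W Z := sub_eq_iff_eq_add'.mpr hZ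
  have hstep : ‖Z - Y₀‖ ≤ a / 2 := by
    rw [hstage, norm_smul, Real.norm_of_nonneg (by norm_num)]
    linarith [h₀ Z]
  have hsplit : W Z - W Y₀ - (1 / 2 : ℝ) • fderiv ℝ W Y₀ (W Y₀) =
      (W Z - W Y₀ - fderiv ℝ W Y₀ (Z - Y₀)) + (1 / 2 : ℝ) • fderiv ℝ W Y₀ (W Z - W Y₀) := by
    rw [hstage, map_smul, map_sub]
    module
  have htaylor : ‖W Z - W Y₀ - fderiv ℝ W Y₀ (Z - Y₀)‖ ≤ a * (a / 2) * (a / 2) :=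
    (norm_image_sub_sub_fderiv_le hW hW' h₂ Y₀ Z).trans (by gcongr)
  have hlip : ‖W Z - W Y₀‖ ≤ a * (a / 2) :=
    (convex_univ.norm_image_sub_le_of_norm_fderiv_le (fun w _ => hW w) (fun w _ => h₁ w)
      trivial trivial).trans (by gcongr)
  have hcorr : ‖(1 / 2 : ℝ) • fderiv ℝ W Y₀ (W Z - W Y₀)‖ ≤ 1 / 2 * (a * (a * (a / 2))) := by
    rw [norm_smul, Real.norm_of_nonneg (by norm_num)]
    gcongr
    exact (fderiv ℝ W Y₀).le_of_opNorm_le (h₁ Y₀) _ |>.trans (by gcongr)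
  rw [hsplit]
  calc _ ≤ _ := norm_add_le _ _
    _ ≤ a * (a / 2) * (a / 2) + 1 / 2 * (a * (a * (a / 2))) := add_le_add htaylor hcorr
    _ = a ^ 3 / 2 := by ring

lemma norm_midpoint_remainder_sum_smul_le {ι : Type*} [Fintype ι] {V : ι → E → E}
    (hV : ∀ i, ContDiff ℝ 2 (V i)) {ν : ℝ} (h₀ : ∀ i y, ‖V i y‖ ≤ ν)
    (h₁ : ∀ i y, ‖fderiv ℝ (V i) y‖ ≤ ν) (h₂ : ∀ i y, ‖iteratedFDeriv ℝ 2 (V i) y‖ ≤ ν)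
    (ξ : EuclideanSpace ℝ ι) {Y₀ Z : E} (hZ : Z = Y₀ + (1 / 2 : ℝ) • ∑ i, ξ i • V i Z) :
    ‖∑ i, ξ i • V i Z - ∑ i, ξ i • V i Y₀ -
        (1 / 2 : ℝ) • fderiv ℝ (fun z => ∑ i, ξ i • V i z) Y₀ (∑ i, ξ i • V i Y₀)‖ ≤
      (Fintype.card ι * ν * ‖ξ‖) ^ 3 / 2 := by
  have hd : ∀ i, Differentiable ℝ (V i) := fun i => (hV i).differentiable (by norm_num)
  have hd' : ∀ i, Differentiable ℝ (fderiv ℝ (V i)) :=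
    fun i => ((hV i).fderiv_right (m := 1) (by norm_num)).differentiable (by norm_num)
  have hDW := fderiv_sum_smul ξ hd
  refine norm_midpoint_remainder_le (W := fun z => ∑ i, ξ i • V i z)
    (Differentiable.fun_sum fun i _ => (hd i).const_smul (ξ i)) ?_
    (fun y => norm_sum_smul_le ξ _ (h₀ · y)) (fun y => ?_) (fun y => ?_) hZ
  · rw [hDW]
    exact Differentiable.fun_sum fun i _ => (hd' i).const_smul (ξ i)
  · rw [hDW]
    exact norm_sum_smul_le ξ _ (h₁ · y)
  · rw [hDW, fderiv_sum_smul ξ hd']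
    refine norm_sum_smul_le ξ _ fun i => ?_
    rw [norm_fderiv_fderiv_eq_norm_iteratedFDeriv_two]
    exact h₂ i y

end Expansion

theorem stmt_9_general (n d : ℕ) (ν : ℝ) :
    ∃ C : ℝ, ∀ V : Fin (d + 1) → EuclideanSpace ℝ (Fin n) → EuclideanSpace ℝ (Fin n),
      (∀ i, ContDiff ℝ 2 (V i)) →
      (∀ i y, ‖V i y‖ ≤ ν) →
      (∀ i y, ‖fderiv ℝ (V i) y‖ ≤ ν) →
      (∀ i y, ‖iteratedFDeriv ℝ 2 (V i) y‖ ≤ ν) →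
      ∀ (ξ : EuclideanSpace ℝ (Fin (d + 1))) (Y₀ Z Y₁ : EuclideanSpace ℝ (Fin n)),
        Z = Y₀ + (1 / 2 : ℝ) • ∑ i, ξ i • V i Z →
        Y₁ = Y₀ + ∑ i, ξ i • V i Z →
        ‖Y₁ - Y₀ - (∑ i, ξ i • V i Y₀) -
            (1 / 2 : ℝ) • fderiv ℝ (fun z => ∑ i, ξ i • V i z) Y₀ (∑ i, ξ i • V i Y₀)‖ ≤
          C * (‖ξ‖ ^ 3 + ‖ξ‖ ^ 4) := by
  refine ⟨((d + 1) * ν) ^ 3 / 2, fun V hV h₀ h₁ h₂ ξ Y₀ Z Y₁ hZ hY₁ => ?_⟩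
  have hK : 0 ≤ (d + 1) * ν := mul_nonneg (by positivity) ((norm_nonneg _).trans (h₀ 0 0))
  have key := norm_midpoint_remainder_sum_smul_le hV h₀ h₁ h₂ ξ hZ
  rw [Fintype.card_fin, Nat.cast_add_one] at key
  rw [hY₁, add_sub_cancel_left]
  calc _ ≤ ((d + 1) * ν * ‖ξ‖) ^ 3 / 2 := key
    _ = ((d + 1) * ν) ^ 3 / 2 * ‖ξ‖ ^ 3 := by ring
    _ ≤ ((d + 1) * ν) ^ 3 / 2 * (‖ξ‖ ^ 3 + ‖ξ‖ ^ 4) := by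
        gcongr
        exact le_add_of_nonneg_right (by positivity)

/-- Second-order expansion of the midpoint step (estimate of `R₂` in the proof
of Theorem 5.2). The constant `C` depends only on `ν`, `d` and `n`. -/
theorem stmt_9 (n d : ℕ) (hn : 1 ≤ n) (ν : ℝ) :
    ∃ C : ℝ, ∀ V : Fin (d + 1) → EuclideanSpace ℝ (Fin n) → EuclideanSpace ℝ (Fin n),
      (∀ i, ContDiff ℝ 2 (V i)) →
      (∀ i y, ‖V i y‖ ≤ ν) →
      (∀ i y, ‖fderiv ℝ (V i) y‖ ≤ ν) →
      (∀ i y, ‖iteratedFDeriv ℝ 2 (V i) y‖ ≤ ν) →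
      ∀ (ξ : EuclideanSpace ℝ (Fin (d + 1))) (Y₀ Z Y₁ : EuclideanSpace ℝ (Fin n)),
        Z = Y₀ + (1 / 2 : ℝ) • ∑ i, ξ i • V i Z →
        Y₁ = Y₀ + ∑ i, ξ i • V i Z →
        ‖Y₁ - Y₀ - (∑ i, ξ i • V i Y₀) -
            (1 / 2 : ℝ) • fderiv ℝ (fun z => ∑ i, ξ i • V i z) Y₀ (∑ i, ξ i • V i Y₀)‖ ≤
          C * (‖ξ‖ ^ 3 + ‖ξ‖ ^ 4) :=
  stmt_9_general n d ν
end

section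
/- (Local error of the midpoint scheme against the Wong–Zakai approximation; Step 1 of the proof of Theorem 5.2.) Let n ≥ 1, d ≥ 0, and let V₀, …, V_d : ℝⁿ → ℝⁿ be twice continuously differentiable with ‖Vᵢ(y)‖ ≤ ν, ‖DVᵢ(y)‖ ≤ ν, ‖D²Vᵢ(y)‖ ≤ ν for all y and i. Fix ξ = (ξ₀, …, ξ_d) ∈ ℝ^{d+1} and set W(y) = ∑_{i=0}^{d} ξᵢ Vᵢ(y). Let y : [0, 1] → ℝⁿ be differentiable with y'(u) = W(y(u)) for all u ∈ [0, 1] and y(0) = Y₀, and suppose Z ∈ ℝⁿ satisfies Z = Y₀ + (1/2) W(Z), with Y₁ = Y₀ + W(Z). Then there is a constant C, depending only on ν, d, and n, such that ‖Y₁ − y(1)‖ ≤ C (‖ξ‖³ + ‖ξ‖⁴). -/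
/-!
The flow satisfies `y 1 - y 0 = ∫₀¹ W (y u) du`. Linearizing `W` at the stage value `Z`, with
`L = DW(Z)`,
  `y 0 + W Z - y 1 = -∫₀¹ (W (y u) - W Z - L (y u - Z)) du - L (∫₀¹ (y u - y 0 - u W Z) du)`,
because the midpoint relation `Z = y 0 + ½ W Z = ∫₀¹ (y 0 + u W Z) du` turns `∫₀¹ (y u - Z)` into
the second integral. If `A` bounds `W`, `DW` and `D²W`, then `y u - Z = O(A)` and
`y u - y 0 - u W Z = O(A²)`, so both terms are `O(A³)`; for `W = ∑ ξᵢ Vᵢ` one may take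
`A = (d + 1) ‖ξ‖ ν`.
-/

open Set MeasureTheory

section Taylor

variable {E F : Type*} [NormedAddCommGroup E] [NormedSpace ℝ E]
  [NormedAddCommGroup F] [NormedSpace ℝ F]

lemma norm_fderiv_fderiv_eq (f : E → F) (x : E) :
    ‖fderiv ℝ (fderiv ℝ f) x‖ = ‖iteratedFDeriv ℝ 2 f x‖ := by
  rw [← norm_iteratedFDeriv_one, norm_iteratedFDeriv_fderiv]

lemma norm_sub_sub_fderiv_le_of_norm_iteratedFDeriv_two_le {f : E → F} (hf : ContDiff ℝ 2 f)
    {c : ℝ} (h : ∀ x, ‖iteratedFDeriv ℝ 2 f x‖ ≤ c) (x a : E) :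
    ‖f x - f a - fderiv ℝ f a (x - a)‖ ≤ c * ‖x - a‖ ^ 2 := by
  have hc : 0 ≤ c := (norm_nonneg _).trans (h a)
  have hfd : Differentiable ℝ (fderiv ℝ f) :=
    (hf.fderiv_right (m := 1) (by norm_num)).differentiable (by simp)
  have hlip (z : E) : ‖fderiv ℝ f z - fderiv ℝ f a‖ ≤ c * ‖z - a‖ :=
    convex_univ.norm_image_sub_le_of_norm_fderiv_le (fun w _ => hfd w)
      (fun w _ => (norm_fderiv_fderiv_eq f w).trans_le (h w)) (mem_univ a) (mem_univ z)
  have hseg : ∀ z ∈ segment ℝ a x, ‖z - a‖ ≤ ‖x - a‖ := fun z hz => by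
    rw [← dist_eq_norm, ← dist_eq_norm, dist_comm z, dist_comm x]
    linarith [dist_add_dist_of_mem_segment hz, dist_nonneg (x := z) (y := x)]
  -- mean value inequality for `z ↦ f z - f' a z`, whose derivative `f' z - f' a` is `O(‖z - a‖)`
  have key := (convex_segment a x).norm_image_sub_le_of_norm_hasFDerivWithin_le
    (f := fun z => f z - fderiv ℝ f a z) (f' := fun z => fderiv ℝ f z - fderiv ℝ f a)
    (fun z _ => (((hf.differentiable (by norm_num) z).hasFDerivAt).sub
      (fderiv ℝ f a).hasFDerivAt).hasFDerivWithinAt)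
    (fun z hz => (hlip z).trans (mul_le_mul_of_nonneg_left (hseg z hz) hc))
    (left_mem_segment ℝ a x) (right_mem_segment ℝ a x)
  calc ‖f x - f a - fderiv ℝ f a (x - a)‖
      = ‖(f x - fderiv ℝ f a x) - (f a - fderiv ℝ f a a)‖ := by rw [map_sub]; abel_nf
    _ ≤ c * ‖x - a‖ * ‖x - a‖ := key
    _ = c * ‖x - a‖ ^ 2 := by ring

end Taylor

lemma norm_sum_smul_le_s10 {m : ℕ} {F : Type*} [NormedAddCommGroup F] [NormedSpace ℝ F]
    (ξ : EuclideanSpace ℝ (Fin m)) (w : Fin m → F) {b : ℝ} (hw : ∀ i, ‖w i‖ ≤ b) :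
    ‖∑ i, ξ i • w i‖ ≤ m * ‖ξ‖ * b := by
  calc ‖∑ i, ξ i • w i‖ ≤ ∑ i, ‖ξ i‖ * ‖w i‖ := norm_sum_le_of_le _ fun i _ => (norm_smul _ _).le
    _ ≤ ∑ _i : Fin m, ‖ξ‖ * b := Finset.sum_le_sum fun i _ =>
        mul_le_mul (PiLp.norm_apply_le ξ i) (hw i) (norm_nonneg _) (norm_nonneg _)
    _ = m * ‖ξ‖ * b := by simp [mul_assoc]

lemma norm_iteratedFDeriv_sum_smul_le {m k : ℕ} {E F : Type*} [NormedAddCommGroup E]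
    [NormedSpace ℝ E] [NormedAddCommGroup F] [NormedSpace ℝ F]
    {V : Fin m → E → F} (hV : ∀ i, ContDiff ℝ k (V i)) (ξ : EuclideanSpace ℝ (Fin m)) {ν : ℝ}
    (h : ∀ i x, ‖iteratedFDeriv ℝ k (V i) x‖ ≤ ν) (x : E) :
    ‖iteratedFDeriv ℝ k (fun x => ∑ i, ξ i • V i x) x‖ ≤ m * ‖ξ‖ * ν := by
  rw [iteratedFDeriv_fun_sum_apply fun i _ => ((hV i).const_smul (ξ i)).contDiffAt]
  simp only [iteratedFDeriv_const_smul_apply' (hV _).contDiffAt]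
  exact norm_sum_smul_le_s10 ξ _ fun i => h i x

section MidpointStep

variable {E : Type*} [NormedAddCommGroup E] [NormedSpace ℝ E]
  {W : E → E} {y : ℝ → E} {Z : E}

lemma norm_intervalIntegral_zero_one_le {f : ℝ → E} {C : ℝ}
    (h : ∀ u ∈ Icc (0 : ℝ) 1, ‖f u‖ ≤ C) : ‖∫ u in (0 : ℝ)..1, f u‖ ≤ C := by
  simpa using intervalIntegral.norm_integral_le_of_norm_le_const
    (a := 0) (b := 1) fun u hu => h u (Ioc_subset_Icc_self (by simpa using hu))

lemma midpoint_defect_eq [CompleteSpace E] (hW : Continuous W)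
    (hy : ∀ u ∈ Icc (0 : ℝ) 1, HasDerivAt y (W (y u)) u) (hZ : Z = y 0 + (1 / 2 : ℝ) • W Z)
    (L : E →L[ℝ] E) :
    y 0 + W Z - y 1 = -(∫ u in (0 : ℝ)..1, W (y u) - W Z - L (y u - Z))
      - L (∫ u in (0 : ℝ)..1, y u - y 0 - u • W Z) := by
  have hy' : ∀ u ∈ uIcc (0 : ℝ) 1, HasDerivAt y (W (y u)) u := by
    rwa [uIcc_of_le zero_le_one]
  have hyc : ContinuousOn y (uIcc 0 1) := fun u hu => (hy' u hu).continuousAt.continuousWithinAt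
  have hWy : IntervalIntegrable (fun u => W (y u)) volume 0 1 :=
    (hW.comp_continuousOn hyc).intervalIntegrable
  have hyi : IntervalIntegrable y volume 0 1 := hyc.intervalIntegrable
  have hLi : IntervalIntegrable (fun u => L (y u - Z)) volume 0 1 :=
    (L.continuous.comp_continuousOn (hyc.sub continuousOn_const)).intervalIntegrable
  have hui : IntervalIntegrable (fun u : ℝ => u • W Z) volume 0 1 :=
    (continuous_id.smul continuous_const).intervalIntegrable _ _
  have hFTC : ∫ u in (0 : ℝ)..1, W (y u) = y 1 - y 0 :=
    intervalIntegral.integral_eq_sub_of_hasDerivAt hy' hWy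
  rw [intervalIntegral.integral_sub (hWy.sub intervalIntegrable_const) hLi,
    intervalIntegral.integral_sub hWy intervalIntegrable_const,
    intervalIntegral.integral_sub (hyi.sub intervalIntegrable_const) hui,
    intervalIntegral.integral_sub hyi intervalIntegrable_const,
    L.intervalIntegral_comp_comm (hyi.sub intervalIntegrable_const),
    intervalIntegral.integral_sub hyi intervalIntegrable_const,
    intervalIntegral.integral_smul_const, hFTC]
  have hLZ : L Z = L (y 0) + (1 / 2 : ℝ) • L (W Z) := by rw [← map_smul, ← map_add, ← hZ]
  simp only [intervalIntegral.integral_const, integral_id, map_sub]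
  norm_num [hLZ]
  module

lemma norm_sub_le_of_hasDerivAt_of_norm_le {f f' : ℝ → E} {C : ℝ} (hC : 0 ≤ C)
    (hf : ∀ u ∈ Icc (0 : ℝ) 1, HasDerivAt f (f' u) u) (h : ∀ u ∈ Icc (0 : ℝ) 1, ‖f' u‖ ≤ C) :
    ∀ u ∈ Icc (0 : ℝ) 1, ‖f u - f 0‖ ≤ C := fun u hu =>
  (norm_image_sub_le_of_norm_deriv_le_segment' (fun v hv => (hf v hv).hasDerivWithinAt)
    (fun v hv => h v (Ico_subset_Icc_self hv)) u hu).trans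
    (by nlinarith [hu.1, hu.2])

theorem norm_midpoint_step_sub_le [CompleteSpace E] {A : ℝ} (hW : ContDiff ℝ 2 W)
    (h₀ : ∀ x, ‖W x‖ ≤ A) (h₁ : ∀ x, ‖fderiv ℝ W x‖ ≤ A)
    (h₂ : ∀ x, ‖iteratedFDeriv ℝ 2 W x‖ ≤ A)
    (hy : ∀ u ∈ Icc (0 : ℝ) 1, HasDerivAt y (W (y u)) u) (hZ : Z = y 0 + (1 / 2 : ℝ) • W Z) :
    ‖y 0 + W Z - y 1‖ ≤ 4 * A ^ 3 := by
  have hA : 0 ≤ A := (norm_nonneg _).trans (h₀ 0)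
  have hWd : Differentiable ℝ W := hW.differentiable (by norm_num)
  have hlip (x a : E) : ‖W x - W a‖ ≤ A * ‖x - a‖ :=
    convex_univ.norm_image_sub_le_of_norm_fderiv_le (fun z _ => hWd z) (fun z _ => h₁ z)
      (mem_univ a) (mem_univ x)
  have hdist : ∀ u ∈ Icc (0 : ℝ) 1, ‖y u - Z‖ ≤ 3 / 2 * A := fun u hu => by
    have hZ₀ : ‖Z - y 0‖ ≤ 1 / 2 * A := by
      rw [sub_eq_of_eq_add' hZ, norm_smul, Real.norm_of_nonneg (by norm_num)]
      exact mul_le_mul_of_nonneg_left (h₀ _) (by norm_num)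
    calc ‖y u - Z‖ = ‖(y u - y 0) - (Z - y 0)‖ := by abel_nf
      _ ≤ A + 1 / 2 * A := (norm_sub_le _ _).trans (add_le_add
          (norm_sub_le_of_hasDerivAt_of_norm_le hA hy (fun v _ => h₀ _) u hu) hZ₀)
      _ = 3 / 2 * A := by ring
  have hstep : ∀ u ∈ Icc (0 : ℝ) 1, ‖y u - y 0 - u • W Z‖ ≤ 3 / 2 * A ^ 2 := by
    have := norm_sub_le_of_hasDerivAt_of_norm_le (f := fun u => y u - u • W Z)
      (f' := fun u => W (y u) - W Z) (C := 3 / 2 * A ^ 2) (by positivity)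
      (fun u hu => by simpa using (hy u hu).fun_sub ((hasDerivAt_id' u).smul_const (W Z)))
      (fun u hu => (hlip _ _).trans <| by
        nlinarith [mul_le_mul_of_nonneg_left (hdist u hu) hA])
    simpa [sub_right_comm] using this
  have hrem : ∀ u ∈ Icc (0 : ℝ) 1,
      ‖W (y u) - W Z - fderiv ℝ W Z (y u - Z)‖ ≤ 9 / 4 * A ^ 3 := fun u hu =>
    (norm_sub_sub_fderiv_le_of_norm_iteratedFDeriv_two_le hW h₂ _ _).trans <| by
      nlinarith [mul_le_mul_of_nonneg_left
        (pow_le_pow_left₀ (norm_nonneg _) (hdist u hu) 2) hA]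
  rw [midpoint_defect_eq hWd.continuous hy hZ (fderiv ℝ W Z)]
  calc _ ≤ 9 / 4 * A ^ 3 + A * (3 / 2 * A ^ 2) :=
        (norm_sub_le _ _).trans <| add_le_add
          ((norm_neg _).trans_le (norm_intervalIntegral_zero_one_le hrem))
          ((ContinuousLinearMap.le_opNorm _ _).trans <|
            mul_le_mul (h₁ Z) (norm_intervalIntegral_zero_one_le hstep) (norm_nonneg _) hA)
    _ ≤ 4 * A ^ 3 := by nlinarith [pow_nonneg hA 3]

end MidpointStep

theorem stmt_10_general (n d : ℕ) (ν : ℝ) :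
    ∃ C : ℝ, ∀ V : Fin (d + 1) → EuclideanSpace ℝ (Fin n) → EuclideanSpace ℝ (Fin n),
      (∀ i, ContDiff ℝ 2 (V i)) →
      (∀ i y, ‖V i y‖ ≤ ν) →
      (∀ i y, ‖fderiv ℝ (V i) y‖ ≤ ν) →
      (∀ i y, ‖iteratedFDeriv ℝ 2 (V i) y‖ ≤ ν) →
      ∀ (ξ : EuclideanSpace ℝ (Fin (d + 1))) (Y₀ Z Y₁ : EuclideanSpace ℝ (Fin n))
        (y : ℝ → EuclideanSpace ℝ (Fin n)),
        (∀ u ∈ Set.Icc (0 : ℝ) 1, HasDerivAt y (∑ i, ξ i • V i (y u)) u) →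
        y 0 = Y₀ →
        Z = Y₀ + (1 / 2 : ℝ) • ∑ i, ξ i • V i Z →
        Y₁ = Y₀ + ∑ i, ξ i • V i Z →
        ‖Y₁ - y 1‖ ≤ C * (‖ξ‖ ^ 3 + ‖ξ‖ ^ 4) := by
  refine ⟨4 * (((d : ℝ) + 1) * ν) ^ 3, ?_⟩
  intro V hV hV₀ hV₁ hV₂ ξ Y₀ Z Y₁ y hy hy₀ hZ hY₁
  subst hy₀ hY₁
  have hν : 0 ≤ ν := (norm_nonneg _).trans (hV₀ 0 0)
  have hW (k : ℕ) (hk : k ≤ 2) (hVk : ∀ i x, ‖iteratedFDeriv ℝ k (V i) x‖ ≤ ν) (x) :=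
    norm_iteratedFDeriv_sum_smul_le (fun i => (hV i).of_le (by exact_mod_cast hk)) ξ hVk x
  have key := norm_midpoint_step_sub_le (ContDiff.sum fun i _ => (hV i).const_smul (ξ i))
    (fun x => by simpa using hW 0 (by norm_num) (by simpa using hV₀) x)
    (fun x => by simpa using hW 1 (by norm_num) (by simpa using hV₁) x)
    (hW 2 le_rfl hV₂) hy hZ
  calc _ ≤ 4 * (((d : ℝ) + 1) * ‖ξ‖ * ν) ^ 3 := by simpa using key
    _ ≤ 4 * (((d : ℝ) + 1) * ν) ^ 3 * (‖ξ‖ ^ 3 + ‖ξ‖ ^ 4) := by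
      rw [show 4 * (((d : ℝ) + 1) * ‖ξ‖ * ν) ^ 3 = 4 * (((d : ℝ) + 1) * ν) ^ 3 * ‖ξ‖ ^ 3 by ring]
      gcongr
      exact le_add_of_nonneg_right (by positivity)

/-- Local error of the midpoint scheme against the Wong--Zakai approximation
(Step 1 of the proof of Theorem 5.2). The constant `C` depends only on `ν`,
`d` and `n`. -/
theorem stmt_10 (n d : ℕ) (hn : 1 ≤ n) (ν : ℝ) :
    ∃ C : ℝ, ∀ V : Fin (d + 1) → EuclideanSpace ℝ (Fin n) → EuclideanSpace ℝ (Fin n),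
      (∀ i, ContDiff ℝ 2 (V i)) →
      (∀ i y, ‖V i y‖ ≤ ν) →
      (∀ i y, ‖fderiv ℝ (V i) y‖ ≤ ν) →
      (∀ i y, ‖iteratedFDeriv ℝ 2 (V i) y‖ ≤ ν) →
      ∀ (ξ : EuclideanSpace ℝ (Fin (d + 1))) (Y₀ Z Y₁ : EuclideanSpace ℝ (Fin n))
        (y : ℝ → EuclideanSpace ℝ (Fin n)),
        (∀ u ∈ Set.Icc (0 : ℝ) 1, HasDerivAt y (∑ i, ξ i • V i (y u)) u) →
        y 0 = Y₀ →
        Z = Y₀ + (1 / 2 : ℝ) • ∑ i, ξ i • V i Z →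
        Y₁ = Y₀ + ∑ i, ξ i • V i Z →
        ‖Y₁ - y 1‖ ≤ C * (‖ξ‖ ^ 3 + ‖ξ‖ ^ 4) :=
  stmt_10_general n d ν
end
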